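/- arXiv:2009.09491 — 2 statements merged into one kernel-verified Lean document; each statement's English description precedes it below -/
import Mathlib

section
/- For a simple symmetric random walk on ℤ started at 0, the maximum absolute value attained during the first excursion away from 0 (i.e., the max of |position| up to the first return to 0) equals z with probability 1/(z(z+1)) for each positive integer z. -/
/-!
Almost surely every step is `±1`, and then the event is the disjoint union of the cylinders of
the finite excursion words with maximum `z`; its probability is the total weight `∑ 2^(-length)`
of these words. Reflection `w ↦ -w` reduces to excursions whose first step is up. Cutting such an
excursion at its first visit to `z` writes it as a path from `1` that reaches `z` before `0`,
followed by a path from `z` that reaches `0` before `z + 1`; reflected in `(z + 1) / 2`, the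
latter is a path from `1` that reaches `z + 1` before `0`. By gambler's ruin these two families
have weights `1/z` and `1/(z + 1)`, whence `2 · 1/2 · 1/z · 1/(z + 1)`.

Gambler's ruin: the weight `h a` of the paths from `a` that reach `m` before `0` is harmonic on
`(0, m)` with `h 0 = 0` and `h m = 1`, hence linear, provided `h 1 < ∞` (in `ℝ≥0∞` the constant
`∞` is also harmonic). That bound is Kraft's inequality for the prefix-free set of such paths.
-/

open MeasureTheory ProbabilityTheory InformationTheory
open scoped ENNReal

lemma Finset.sup_eq_iff_of_nonempty {ι α : Type*} [LinearOrder α] [OrderBot α] {s : Finset ι}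
    (hs : s.Nonempty) {f : ι → α} {a : α} :
    s.sup f = a ↔ (∀ i ∈ s, f i ≤ a) ∧ ∃ i ∈ s, f i = a := by
  constructor
  · rintro rfl
    obtain ⟨i, hi, h⟩ := Finset.exists_mem_eq_sup s hs f
    exact ⟨fun j hj => Finset.le_sup hj, i, hi, h.symm⟩
  · rintro ⟨hle, i, hi, rfl⟩
    exact le_antisymm (Finset.sup_le hle) (Finset.le_sup hi)

theorem ENNReal.eq_natCast_mul_of_two_mul_eq_add {f : ℕ → ℝ≥0∞} {m : ℕ} (h0 : f 0 = 0)
    (h1 : f 1 ≠ ⊤) (h : ∀ k, k + 2 ≤ m → 2 * f (k + 1) = f k + f (k + 2)) :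
    ∀ k ≤ m, f k = k * f 1 := by
  intro k
  induction k using Nat.twoStepInduction with
  | zero => simp [h0]
  | one => simp
  | more k ih₀ ih₁ =>
    intro hk
    have hfin : (k : ℝ≥0∞) * f 1 ≠ ⊤ := ENNReal.mul_ne_top (by simp) h1
    have hk2 := h k hk
    rw [ih₀ (by omega), ih₁ (by omega)] at hk2
    rw [← ENNReal.add_right_inj hfin, ← hk2]
    push_cast
    ring

namespace SimpleRandomWalk

def move (b : Bool) : ℤ := if b then 1 else -1

@[simp] lemma move_true : move true = 1 := rfl
@[simp] lemma move_false : move false = -1 := rfl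
@[simp] lemma move_not (b : Bool) : move (!b) = -move b := by cases b <;> rfl

lemma move_eq_one_or_neg_one (b : Bool) : move b = 1 ∨ move b = -1 := by cases b <;> simp

lemma move_injective : Function.Injective move := by
  intro b c; cases b <;> cases c <;> simp

def height (w : List Bool) : ℤ := (w.map move).sum

@[simp] lemma height_nil : height [] = 0 := rfl
@[simp] lemma height_cons (b : Bool) (w : List Bool) : height (b :: w) = move b + height w := by
  simp [height]
@[simp] lemma height_append (u v : List Bool) : height (u ++ v) = height u + height v := by
  simp [height]
@[simp] lemma height_map_not (w : List Bool) : height (w.map not) = -height w := by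
  induction w with
  | nil => rfl
  | cons b w ih => simp [ih]; ring

lemma height_take_add_one {w : List Bool} {k : ℕ} (hk : k < w.length) :
    height (w.take (k + 1)) = height (w.take k) + move w[k] := by
  rw [List.take_succ_eq_append_getElem hk, height_append]; simp

noncomputable def weight (w : List Bool) : ℝ≥0∞ := 2⁻¹ ^ w.length

@[simp] lemma weight_nil : weight [] = 1 := by simp [weight]
@[simp] lemma weight_cons (b : Bool) (w : List Bool) : weight (b :: w) = 2⁻¹ * weight w := by
  simp [weight, pow_succ, mul_comm]
@[simp] lemma weight_append (u v : List Bool) : weight (u ++ v) = weight u * weight v := by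
  simp [weight, pow_add]
@[simp] lemma weight_map_not (w : List Bool) : weight (w.map not) = weight w := by
  simp [weight]

section PrefixFree

variable {α : Type*}

def PrefixFree (W : Set (List α)) : Prop :=
  ∀ u ∈ W, ∀ w ∈ W, u <+: w → u = w

lemma PrefixFree.of_take_notMem {W : Set (List α)}
    (h : ∀ w ∈ W, ∀ k < w.length, w.take k ∉ W) : PrefixFree W := by
  intro u hu w hw huw
  by_contra hne
  have hlt : u.length < w.length := huw.length_le.lt_of_ne (hne ∘ huw.eq_of_length)
  exact h w hw u.length hlt (List.prefix_iff_eq_take.1 huw ▸ hu)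

lemma PrefixFree.mono {V W : Set (List α)} (hW : PrefixFree W) (hVW : V ⊆ W) :
    PrefixFree V :=
  fun u hu w hw => hW u (hVW hu) w (hVW hw)

lemma PrefixFree.eq_of_append_eq {W : Set (List α)} (hW : PrefixFree W)
    {u v x y : List α} (hu : u ∈ W) (hv : v ∈ W) (h : u ++ x = v ++ y) : u = v := by
  rcases List.prefix_or_prefix_of_prefix (h ▸ List.prefix_append u x) (List.prefix_append v y)
    with p | p
  · exact hW u hu v hv p
  · exact (hW v hv u hu p).symm

lemma PrefixFree.injOn_append {U : Set (List α)} (hU : PrefixFree U)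
    (V : Set (List α)) : Set.InjOn (fun p : List α × List α => p.1 ++ p.2) (U ×ˢ V) := by
  rintro ⟨u, v⟩ ⟨hu, -⟩ ⟨u', v'⟩ ⟨hu', -⟩ h
  simp only at h hu hu'
  obtain rfl := hU.eq_of_append_eq hu hu' h
  rw [List.append_cancel_left h]

lemma PrefixFree.uniquelyDecodable {W : Set (List α)} (hW : PrefixFree W)
    (hnil : [] ∉ W) : UniquelyDecodable W := by
  intro L₁
  induction L₁ with
  | nil =>
    rintro (_ | ⟨v, L₂⟩) - h₂ h
    · rfl
    · simp only [List.flatten_nil, List.flatten_cons, List.nil_eq_append_iff] at h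
      exact absurd (h.1 ▸ h₂ v (by simp)) hnil
  | cons u L₁ ih =>
    rintro (_ | ⟨v, L₂⟩) h₁ h₂ h
    · simp only [List.flatten_nil, List.flatten_cons, List.append_eq_nil_iff] at h
      exact absurd (h.1 ▸ h₁ u (by simp)) hnil
    · simp only [List.flatten_cons] at h
      obtain rfl := hW.eq_of_append_eq (h₁ u (by simp)) (h₂ v (by simp)) h
      rw [ih L₂ (fun w hw => h₁ w (by simp [hw])) (fun w hw => h₂ w (by simp [hw]))
        (List.append_cancel_left h)]

end PrefixFree

lemma weight_eq_ofReal (w : List Bool) :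
    weight w = ENNReal.ofReal ((1 / Fintype.card Bool : ℝ) ^ w.length) := by
  rw [ENNReal.ofReal_pow (by positivity), Fintype.card_bool, weight, Nat.cast_ofNat, one_div,
    ENNReal.ofReal_inv_of_pos two_pos, ENNReal.ofReal_ofNat]

lemma PrefixFree.tsum_weight_le_one {W : Set (List Bool)} (hW : PrefixFree W) (hnil : [] ∉ W) :
    ∑' w : W, weight w ≤ 1 := by
  rw [ENNReal.tsum_eq_iSup_sum]
  refine iSup_le fun s => ?_
  have hsub : ↑(s.map (Function.Embedding.subtype _)) ⊆ W := by
    simp [Set.image_subset_iff]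
  have hs := (hW.mono hsub).uniquelyDecodable (hnil <| hsub ·)
  calc ∑ w ∈ s, weight w = ∑ w ∈ s.map (Function.Embedding.subtype _), weight w := by
        rw [Finset.sum_map]; rfl
    _ = ENNReal.ofReal (∑ w ∈ s.map (Function.Embedding.subtype _),
          (1 / Fintype.card Bool : ℝ) ^ w.length) := by
        rw [ENNReal.ofReal_sum_of_nonneg (fun _ _ => by positivity)]
        exact Finset.sum_congr rfl fun w _ => weight_eq_ofReal w
    _ ≤ 1 := ENNReal.ofReal_le_one.2 (kraft_mcmillan_inequality hs)

lemma tsum_weight_eq_half_add (W : Set (List Bool)) (hnil : [] ∉ W) :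
    ∑' w : W, weight w =
      2⁻¹ * ∑' w : List.cons true ⁻¹' W, weight w +
        2⁻¹ * ∑' w : List.cons false ⁻¹' W, weight w := by
  have hW : W = List.cons true '' (List.cons true ⁻¹' W) ∪
      List.cons false '' (List.cons false ⁻¹' W) := by
    ext (_ | ⟨b, w⟩)
    · simp [hnil]
    · cases b <;> simp
  generalize List.cons true ⁻¹' W = T at hW ⊢
  generalize List.cons false ⁻¹' W = F at hW ⊢
  subst hW
  have hdisj : Disjoint (List.cons true '' T) (List.cons false '' F) := by
    simp [Set.disjoint_left]
  rw [Summable.tsum_union_disjoint hdisj ENNReal.summable ENNReal.summable,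
    tsum_image _ List.cons_injective.injOn, tsum_image _ List.cons_injective.injOn]
  simp only [weight_cons, ENNReal.tsum_mul_left]

lemma tsum_weight_preimage_map_not (W : Set (List Bool)) :
    ∑' w : List.map not ⁻¹' W, weight w = ∑' w : W, weight w := by
  have hinv : Function.Involutive (List.map not) := fun w => by simp [Function.comp_def]
  rw [← Set.image_eq_preimage_of_inverse hinv.leftInverse hinv.rightInverse,
    tsum_image _ hinv.injective.injOn]
  simp

lemma tsum_weight_image_append {U V : Set (List Bool)}
    (h : Set.InjOn (fun p : List Bool × List Bool => p.1 ++ p.2) (U ×ˢ V)) :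
    ∑' w : (fun p : List Bool × List Bool => p.1 ++ p.2) '' (U ×ˢ V), weight w =
      (∑' u : U, weight u) * ∑' v : V, weight v := by
  rw [tsum_image _ h, ← (Equiv.Set.prod U V).symm.tsum_eq]
  simp only [weight_append]
  change ∑' c : U × V, weight c.1 * weight c.2 = _
  rw [ENNReal.tsum_prod (f := fun (u : U) (v : V) => weight u * weight v)]
  simp only [ENNReal.tsum_mul_left, ENNReal.tsum_mul_right]

def Stays (P : ℤ → Prop) (a : ℤ) (w : List Bool) : Prop :=
  ∀ k < w.length, P (a + height (w.take k))

section Stays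

variable {P : ℤ → Prop} {a : ℤ} {w : List Bool}

@[simp] lemma stays_nil : Stays P a [] := fun _ hk => absurd hk (Nat.not_lt_zero _)

lemma stays_cons {b : Bool} : Stays P a (b :: w) ↔ P a ∧ Stays P (a + move b) w := by
  simp only [Stays, List.length_cons]
  constructor
  · intro h
    refine ⟨by simpa using h 0 (by omega), fun k hk => ?_⟩
    simpa [add_assoc] using h (k + 1) (by omega)
  · rintro ⟨h0, h⟩ (_ | k) hk
    · simpa using h0
    · simpa [add_assoc] using h k (by omega)

lemma stays_append {u v : List Bool} :
    Stays P a (u ++ v) ↔ Stays P a u ∧ Stays P (a + height u) v := by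
  induction u generalizing a with
  | nil => simp
  | cons b u ih => simp [stays_cons, ih, and_assoc, add_assoc]

lemma Stays.mono {Q : ℤ → Prop} (h : Stays P a w) (hPQ : ∀ x, P x → Q x) : Stays Q a w :=
  fun k hk => hPQ _ (h k hk)

lemma Stays.pos_of_ne_zero (ha : 0 < a) (h : Stays (· ≠ 0) a w) : Stays (0 < ·) a w := by
  intro k hk
  induction k with
  | zero => simpa using ha
  | succ k ih =>
    have h1 := h (k + 1) hk
    have h2 := ih (by omega)
    rw [height_take_add_one (by omega)] at h1 ⊢
    rcases move_eq_one_or_neg_one w[k] with h3 | h3 <;> simp only [h3] at h1 ⊢ <;> omega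

lemma Stays.forall_le_length (h : Stays P a w) (hend : P (a + height w)) :
    ∀ k ≤ w.length, P (a + height (w.take k)) := by
  intro k hk
  rcases hk.lt_or_eq with hk | rfl
  · exact h k hk
  · rwa [List.take_length]

end Stays

def winPaths (a m : ℤ) : Set (List Bool) :=
  {w | Stays (fun x => 0 < x ∧ x < m) a w ∧ a + height w = m}

section winPaths

variable {a m : ℤ}

lemma nil_mem_winPaths_iff : [] ∈ winPaths a m ↔ a = m := by
  simp [winPaths]

lemma cons_mem_winPaths_iff {b : Bool} {w : List Bool} :
    b :: w ∈ winPaths a m ↔ (0 < a ∧ a < m) ∧ w ∈ winPaths (a + move b) m := by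
  simp [winPaths, stays_cons, and_assoc, add_assoc]

lemma winPaths_self : winPaths m m = {[]} := by
  ext (_ | ⟨b, w⟩) <;> simp [nil_mem_winPaths_iff, cons_mem_winPaths_iff]

lemma winPaths_zero (hm : m ≠ 0) : winPaths 0 m = ∅ := by
  ext (_ | ⟨b, w⟩) <;> simp [nil_mem_winPaths_iff, cons_mem_winPaths_iff, Ne.symm hm]

lemma prefixFree_winPaths : PrefixFree (winPaths a m) :=
  PrefixFree.of_take_notMem fun w hw k hk hwk => by
    have := hw.1 k hk
    have := hwk.2
    omega

lemma map_not_mem_winPaths_iff {w : List Bool} :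
    w.map not ∈ winPaths (m - a) m ↔
      Stays (fun x => 0 < x ∧ x < m) a w ∧ a + height w = 0 := by
  simp only [winPaths, Stays, Set.mem_ofPred_eq, List.length_map, ← List.map_take, height_map_not]
  refine and_congr (forall₂_congr fun k _ => ?_) ?_ <;> omega

end winPaths

noncomputable def winProb (a m : ℤ) : ℝ≥0∞ := ∑' w : winPaths a m, weight w

lemma winProb_self (m : ℤ) : winProb m m = 1 := by
  rw [winProb, winPaths_self, tsum_singleton, weight_nil]

lemma winProb_zero {m : ℤ} (hm : m ≠ 0) : winProb 0 m = 0 := by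
  simp [winProb, winPaths_zero hm]

lemma winProb_ne_top (a m : ℤ) : winProb a m ≠ ⊤ := by
  rcases eq_or_ne a m with rfl | ham
  · simp [winProb_self]
  · exact ne_top_of_le_ne_top ENNReal.one_ne_top
      (prefixFree_winPaths.tsum_weight_le_one (by simpa [nil_mem_winPaths_iff] using ham))

lemma winProb_eq_half_add {a m : ℤ} (ha : 0 < a) (ham : a < m) :
    winProb a m = 2⁻¹ * winProb (a + 1) m + 2⁻¹ * winProb (a - 1) m := by
  have hcons (b : Bool) : List.cons b ⁻¹' winPaths a m = winPaths (a + move b) m := by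
    ext w
    simp [cons_mem_winPaths_iff, ha, ham]
  rw [winProb, tsum_weight_eq_half_add _ (by simpa [nil_mem_winPaths_iff] using ham.ne), hcons,
    hcons]
  simp only [winProb, move_true, move_false]
  rfl

theorem winProb_natCast {a m : ℕ} (ham : a ≤ m) (hm : 0 < m) : winProb a m = a / m := by
  have hlin := ENNReal.eq_natCast_mul_of_two_mul_eq_add (f := fun k => winProb k m) (m := m)
    (by simpa using winProb_zero (by exact_mod_cast hm.ne')) (winProb_ne_top _ _)
    (fun k hk => by
      rw [winProb_eq_half_add (by positivity) (by omega), mul_add, ← mul_assoc, ← mul_assoc,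
        ENNReal.mul_inv_cancel two_ne_zero ENNReal.ofNat_ne_top, one_mul, one_mul, add_comm]
      push_cast
      ring_nf)
  have h1 : winProb 1 m = (m : ℝ≥0∞)⁻¹ := by
    refine ENNReal.eq_inv_of_mul_eq_one_left ?_
    simpa [winProb_self, mul_comm] using (hlin m le_rfl).symm
  simpa [h1, div_eq_mul_inv] using hlin a ham

def IsExcursion (w : List Bool) : Prop :=
  w ≠ [] ∧ height w = 0 ∧ ∀ k, 0 < k → k < w.length → height (w.take k) ≠ 0

def maxAbs (w : List Bool) : ℕ :=
  (Finset.range (w.length + 1)).sup fun k => (height (w.take k)).natAbs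

def excursions (z : ℕ) : Set (List Bool) := {w | IsExcursion w ∧ maxAbs w = z}

lemma isExcursion_cons_iff {b : Bool} {w : List Bool} :
    IsExcursion (b :: w) ↔ move b + height w = 0 ∧ Stays (· ≠ 0) (move b) w := by
  simp only [IsExcursion, ne_eq, reduceCtorEq, not_false_eq_true, height_cons, List.length_cons,
    true_and]
  refine and_congr_right fun _ => ⟨fun h j hj => ?_, fun h k hk0 hk => ?_⟩
  · simpa using h (j + 1) j.succ_pos (by omega)
  · obtain ⟨j, rfl⟩ := Nat.exists_eq_add_one_of_ne_zero hk0.ne'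
    simpa using h j (by omega)

lemma maxAbs_eq_iff {w : List Bool} {z : ℕ} :
    maxAbs w = z ↔ (∀ k < w.length + 1, (height (w.take k)).natAbs ≤ z) ∧
      ∃ k < w.length + 1, (height (w.take k)).natAbs = z := by
  simp [maxAbs, Finset.sup_eq_iff_of_nonempty Finset.nonempty_range_add_one]

lemma cons_true_mem_excursions_iff {z : ℕ} (hz : 0 < z) {w : List Bool} :
    true :: w ∈ excursions z ↔ Stays (fun x => 0 < x ∧ x < z + 1) 1 w ∧ 1 + height w = 0 ∧
      ∃ k ≤ w.length, 1 + height (w.take k) = z := by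
  simp only [excursions, Set.mem_ofPred_eq, isExcursion_cons_iff, maxAbs_eq_iff, List.length_cons]
  rw [Nat.forall_lt_succ_left, Nat.exists_lt_succ_left]
  simp only [List.take_zero, List.take_succ_cons, height_nil, height_cons, move_true,
    Int.natAbs_zero, zero_le, true_and, Nat.lt_add_one_iff]
  constructor
  · rintro ⟨⟨hend, hne⟩, hle, h0 | ⟨k, hk, hkz⟩⟩
    · omega
    have hpos := hne.pos_of_ne_zero one_pos
    have hnn := (hpos.mono fun _ => le_of_lt).forall_le_length hend.ge
    exact ⟨fun j hj => ⟨hpos j hj, by have := hle j hj.le; omega⟩, hend, k, hk,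
      by have := hnn k hk; omega⟩
  · rintro ⟨hst, hend, k, hk, hkz⟩
    have hbdd := (hst.mono (Q := fun x => 0 ≤ x ∧ x < z + 1) fun x hx => ⟨hx.1.le, hx.2⟩)
      |>.forall_le_length ⟨hend.ge, by omega⟩
    refine ⟨⟨hend, hst.mono fun x hx => hx.1.ne'⟩, fun j hj => ?_, Or.inr ⟨k, hk, ?_⟩⟩
    · have := hbdd j hj; omega
    · have := hbdd k hk; omega

lemma mem_image_append_winPaths_iff {a z : ℤ} {w : List Bool} :
    w ∈ (fun p : List Bool × List Bool => p.1 ++ p.2) ''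
        (winPaths a z ×ˢ (List.map not ⁻¹' winPaths 1 (z + 1))) ↔
      Stays (fun x => 0 < x ∧ x < z + 1) a w ∧ a + height w = 0 ∧
        ∃ k ≤ w.length, a + height (w.take k) = z := by
  have hdown (v : List Bool) : v.map not ∈ winPaths 1 (z + 1) ↔
      Stays (fun x => 0 < x ∧ x < z + 1) z v ∧ z + height v = 0 := by
    rw [← map_not_mem_winPaths_iff, add_sub_cancel_left]
  constructor
  · rintro ⟨⟨u, v⟩, ⟨⟨hu, hu_end⟩, hv⟩, rfl⟩
    rw [Set.mem_preimage, hdown] at hv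
    refine ⟨stays_append.2 ⟨hu.mono fun x hx => ⟨hx.1, by omega⟩, hu_end ▸ hv.1⟩, ?_,
      u.length, by simp, by simpa using hu_end⟩
    rw [height_append, ← add_assoc, hu_end, hv.2]
  · rintro ⟨hst, hend, k, hk, hkz⟩
    induction w generalizing a k with
    | nil =>
      obtain rfl : a = z := by simpa using hkz
      exact ⟨([], []), ⟨nil_mem_winPaths_iff.2 rfl, (hdown []).2 ⟨hst, hend⟩⟩, rfl⟩
    | cons b w ih =>
      rcases eq_or_ne a z with rfl | haz
      · exact ⟨([], b :: w), ⟨nil_mem_winPaths_iff.2 rfl, (hdown _).2 ⟨hst, hend⟩⟩,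
          rfl⟩
      obtain ⟨ha, hst⟩ := stays_cons.1 hst
      obtain _ | j := k
      · exact absurd (by simpa using hkz) haz
      have hend' : a + move b + height w = 0 := by rw [add_assoc, ← height_cons, hend]
      obtain ⟨⟨u, v⟩, ⟨hu, hv⟩, rfl⟩ :=
        ih hst hend' j (by simpa using hk) (by simpa [add_assoc] using hkz)
      exact ⟨(b :: u, v), ⟨cons_mem_winPaths_iff.2 ⟨⟨ha.1, by omega⟩, hu⟩, hv⟩, rfl⟩

lemma preimage_cons_true_excursions {z : ℕ} (hz : 0 < z) :
    List.cons true ⁻¹' excursions z = (fun p : List Bool × List Bool => p.1 ++ p.2) ''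
      (winPaths 1 z ×ˢ (List.map not ⁻¹' winPaths 1 (z + 1))) := by
  ext w
  rw [Set.mem_preimage, cons_true_mem_excursions_iff hz, mem_image_append_winPaths_iff]

lemma map_not_mem_excursions_iff {z : ℕ} {w : List Bool} :
    w.map not ∈ excursions z ↔ w ∈ excursions z := by
  simp [excursions, IsExcursion, maxAbs, ← List.map_take]

lemma preimage_cons_false_excursions (z : ℕ) :
    List.cons false ⁻¹' excursions z =
      List.map not ⁻¹' (List.cons true ⁻¹' excursions z) := by
  ext w
  simp [← map_not_mem_excursions_iff (w := false :: w)]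

lemma tsum_weight_excursions {z : ℕ} (hz : 0 < z) :
    ∑' w : excursions z, weight w = 1 / ((z : ℝ≥0∞) * ((z : ℝ≥0∞) + 1)) := by
  have hnil : [] ∉ excursions z := fun h => h.1.1 rfl
  rw [tsum_weight_eq_half_add _ hnil, preimage_cons_false_excursions, tsum_weight_preimage_map_not,
    ← add_mul, ENNReal.inv_two_add_inv_two, one_mul, preimage_cons_true_excursions hz,
    tsum_weight_image_append (prefixFree_winPaths.injOn_append _), tsum_weight_preimage_map_not]
  have h₁ := winProb_natCast (a := 1) (m := z) (by omega) hz
  have h₂ := winProb_natCast (a := 1) (m := z + 1) (by omega) (by omega)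
  push_cast at h₁ h₂
  change winProb 1 z * winProb 1 (z + 1) = _
  rw [h₁, h₂, one_div, one_div, one_div, ENNReal.mul_inv (by simp) (by simp)]

lemma prefixFree_excursions (z : ℕ) : PrefixFree (excursions z) :=
  PrefixFree.of_take_notMem fun w hw k hk hwk =>
    hw.1.2.2 k (Nat.pos_of_ne_zero fun hk0 => hwk.1.1 (by simp [hk0])) hk hwk.1.2.1

def firstSteps (b : ℕ → Bool) (n : ℕ) : List Bool := (List.range n).map b

section firstSteps

variable (b : ℕ → Bool)

@[simp] lemma length_firstSteps (n : ℕ) : (firstSteps b n).length = n := by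
  simp [firstSteps]

lemma take_firstSteps {k n : ℕ} (hk : k ≤ n) : (firstSteps b n).take k = firstSteps b k := by
  rw [firstSteps, ← List.map_take, List.take_range, min_eq_left hk, firstSteps]

lemma height_firstSteps (n : ℕ) :
    height (firstSteps b n) = ∑ i ∈ Finset.range n, move (b i) := by
  induction n with
  | zero => rfl
  | succ n ih => simp [firstSteps, List.range_succ, Finset.sum_range_succ, ← ih]

lemma isExcursion_firstSteps_iff {n : ℕ} :
    IsExcursion (firstSteps b n) ↔ IsLeast {k | 1 ≤ k ∧ height (firstSteps b k) = 0} n := by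
  simp only [IsExcursion, IsLeast, lowerBounds, Set.mem_ofPred_eq, ne_eq,
    ← List.length_eq_zero_iff, length_firstSteps]
  constructor
  · rintro ⟨hn, hzero, hmin⟩
    refine ⟨⟨by omega, hzero⟩, fun k ⟨hk1, hk⟩ => ?_⟩
    by_contra hlt
    exact hmin k hk1 (by omega) (by rwa [take_firstSteps b (by omega)])
  · rintro ⟨⟨hn, hzero⟩, hmin⟩
    refine ⟨by omega, hzero, fun k hk0 hk hkz => ?_⟩
    rw [take_firstSteps b hk.le] at hkz
    exact absurd (hmin ⟨hk0, hkz⟩) (by omega)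

lemma maxAbs_firstSteps (n : ℕ) : maxAbs (firstSteps b n) =
    (Finset.range (n + 1)).sup fun k => (height (firstSteps b k)).natAbs := by
  rw [maxAbs, length_firstSteps]
  exact Finset.sup_congr rfl fun k hk => by
    rw [take_firstSteps b (Nat.lt_add_one_iff.1 (Finset.mem_range.1 hk))]

lemma sup_eq_iff_exists_firstSteps_mem_excursions {z : ℕ} (hz : 0 < z) :
    (Finset.range (sInf {n | 1 ≤ n ∧ height (firstSteps b n) = 0} + 1)).sup
        (fun n => (height (firstSteps b n)).natAbs) = z ↔
      ∃ n, firstSteps b n ∈ excursions z := by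
  constructor
  · intro h
    have hne : {n | 1 ≤ n ∧ height (firstSteps b n) = 0}.Nonempty := by
      by_contra hempty
      rw [Set.not_nonempty_iff_eq_empty.1 hempty, Nat.sInf_empty] at h
      simp [firstSteps] at h
      omega
    have hexc := (isExcursion_firstSteps_iff b).2 ⟨Nat.sInf_mem hne, fun _ hk => Nat.sInf_le hk⟩
    exact ⟨_, hexc, by rwa [maxAbs_firstSteps]⟩
  · rintro ⟨n, hexc, hmax⟩
    rwa [((isExcursion_firstSteps_iff b).1 hexc).csInf_eq, ← maxAbs_firstSteps]

end firstSteps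

section cylinder

variable {Ω : Type*} {X : ℕ → Ω → ℤ}

def cylinder (X : ℕ → Ω → ℤ) (w : List Bool) : Set Ω :=
  ⋂ i ∈ Finset.range w.length, X i ⁻¹' {move (w.getD i false)}

lemma mem_cylinder {w : List Bool} {ω : Ω} :
    ω ∈ cylinder X w ↔ ∀ i (hi : i < w.length), X i ω = move w[i] := by
  simp +contextual [cylinder]

lemma mem_cylinder_iff_eq_firstSteps {b : ℕ → Bool} {ω : Ω} (h : ∀ i, X i ω = move (b i))
    {w : List Bool} : ω ∈ cylinder X w ↔ w = firstSteps b w.length := by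
  simp only [mem_cylinder, h, move_injective.eq_iff]
  constructor
  · intro hw
    apply List.ext_getElem (by simp)
    intro i hi _
    simp [firstSteps, hw i hi]
  · intro hw i hi
    rw [List.getElem_of_eq hw hi]
    simp [firstSteps]

lemma prefix_of_mem_cylinder {u w : List Bool} {ω : Ω} (hu : ω ∈ cylinder X u)
    (hw : ω ∈ cylinder X w) (hl : u.length ≤ w.length) : u <+: w := by
  rw [mem_cylinder] at hu hw
  rw [List.prefix_iff_eq_take]
  refine List.ext_getElem (by simp [hl]) fun i hi _ => ?_
  rw [List.getElem_take]
  exact move_injective ((hu i hi).symm.trans (hw i (by omega)))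

variable [MeasurableSpace Ω] {μ : Measure Ω}

lemma measurableSet_cylinder (hX : ∀ i, Measurable (X i)) (w : List Bool) :
    MeasurableSet (cylinder X w) :=
  Finset.measurableSet_biInter _ fun i _ => hX i (measurableSet_singleton _)

lemma measure_cylinder (hindep : iIndepFun X μ)
    (hdist : ∀ i, μ {ω | X i ω = 1} = 1 / 2 ∧ μ {ω | X i ω = -1} = 1 / 2) (w : List Bool) :
    μ (cylinder X w) = weight w := by
  have hstep (i : ℕ) (c : Bool) : μ (X i ⁻¹' {move c}) = 2⁻¹ := by
    change μ {ω | X i ω = move c} = 2⁻¹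
    cases c
    · simpa using (hdist i).2
    · simpa using (hdist i).1
  rw [cylinder, hindep.measure_inter_preimage_eq_mul _ fun i _ => measurableSet_singleton _]
  simp [hstep, weight]

lemma measure_iUnion_cylinder (hX : ∀ i, Measurable (X i)) (hindep : iIndepFun X μ)
    (hdist : ∀ i, μ {ω | X i ω = 1} = 1 / 2 ∧ μ {ω | X i ω = -1} = 1 / 2)
    {W : Set (List Bool)} (hW : PrefixFree W) :
    μ (⋃ w : W, cylinder X w) = ∑' w : W, weight w := by
  rw [measure_iUnion ?_ fun w : W => measurableSet_cylinder hX w]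
  · exact tsum_congr fun w => measure_cylinder hindep hdist w
  · intro u w huw
    refine Set.disjoint_left.2 fun ω hu hw => huw (Subtype.ext ?_)
    rcases le_total (u : List Bool).length (w : List Bool).length with hl | hl
    · exact hW _ u.2 _ w.2 (prefix_of_mem_cylinder hu hw hl)
    · exact (hW _ w.2 _ u.2 (prefix_of_mem_cylinder hw hu hl)).symm

lemma ae_forall_eq_move [IsProbabilityMeasure μ] (hX : ∀ i, Measurable (X i))
    (hdist : ∀ i, μ {ω | X i ω = 1} = 1 / 2 ∧ μ {ω | X i ω = -1} = 1 / 2) :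
    ∀ᵐ ω ∂μ, ∀ i, X i ω = move (decide (X i ω = 1)) := by
  refine ae_all_iff.2 fun i => ?_
  have hone : MeasurableSet {ω | X i ω = 1} := hX i (measurableSet_singleton 1)
  have hneg : MeasurableSet {ω | X i ω = -1} := hX i (measurableSet_singleton (-1))
  have hdisj : Disjoint {ω | X i ω = 1} {ω | X i ω = -1} :=
    Set.disjoint_left.2 fun ω h₁ h₂ => by simp_all
  have hfull : ∀ᵐ ω ∂μ, ω ∈ {ω | X i ω = 1} ∪ {ω | X i ω = -1} := by
    rw [ae_mem_iff_measure_eq (hone.union hneg).nullMeasurableSet, measure_union hdisj hneg,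
      (hdist i).1, (hdist i).2, ENNReal.add_halves, measure_univ]
  filter_upwards [hfull] with ω h
  rcases h with h | h <;> simp_all

end cylinder

end SimpleRandomWalk

open SimpleRandomWalk in
/-- For simple symmetric random walk on `ℤ` started at `0` (with i.i.d. `±1` steps),
the maximum absolute value attained up to the first return to `0` equals `z` with
probability `1/(z(z+1))` for each positive integer `z`. -/
theorem stmt_1 {Ω : Type*} [MeasurableSpace Ω] (μ : Measure Ω) [IsProbabilityMeasure μ]
    (step : ℕ → Ω → ℤ) (hmeas : ∀ i, Measurable (step i))
    (hindep : iIndepFun step μ)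
    (hdist : ∀ i, μ {ω | step i ω = 1} = 1 / 2 ∧ μ {ω | step i ω = -1} = 1 / 2)
    (S : ℕ → Ω → ℤ) (hS : ∀ n ω, S n ω = ∑ i ∈ Finset.range n, step i ω)
    (T : Ω → ℕ) (hT : ∀ ω, T ω = sInf {n : ℕ | 1 ≤ n ∧ S n ω = 0})
    (z : ℕ) (hz : 0 < z) :
    μ {ω | (Finset.range (T ω + 1)).sup (fun n => (S n ω).natAbs) = z} =
      1 / ((z : ENNReal) * ((z : ENNReal) + 1)) := by
  rw [← tsum_weight_excursions hz,
    ← measure_iUnion_cylinder hmeas hindep hdist (prefixFree_excursions z)]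
  refine measure_congr (Filter.eventuallyEq_set.2 ?_)
  filter_upwards [ae_forall_eq_move hmeas hdist] with ω hω
  set b : ℕ → Bool := fun i => decide (step i ω = 1)
  have hSω (n : ℕ) : S n ω = height (firstSteps b n) := by
    rw [hS, height_firstSteps]
    exact Finset.sum_congr rfl fun i _ => hω i
  simp only [hT, hSω, sup_eq_iff_exists_firstSteps_mem_excursions b hz, Set.mem_iUnion,
    mem_cylinder_iff_eq_firstSteps (b := b) hω, Subtype.exists]
  exact ⟨fun ⟨n, hn⟩ => ⟨_, hn, by simp⟩, fun ⟨w, hw, hwb⟩ => ⟨_, hwb ▸ hw⟩⟩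
end

section
/- Fix λ > 0 and let a = 12⌈e^{100(λ+1)}⌉. Let Y_v be the random variable taking value +1 with probability λ/(λ+1), value 0 with probability 1/(2(λ+1)), and value −min(Z, v) with probability 1/(2(λ+1)), where Z has distribution P(Z=z)=1/(z(z+1)). Then for all v ≥ a/3, E[Y_v] ≤ −48. -/
/-- Drift of `Y_v`: with `λ > 0`, `a = 12⌈e^{100(λ+1)}⌉`, and
`Y_v = +1` w.p. `λ/(λ+1)`, `0` w.p. `1/(2(λ+1))`, `−min(Z,v)` w.p. `1/(2(λ+1))`
where `P(Z=z) = 1/(z(z+1))`, for every `v ≥ a/3` one has `E[Y_v] ≤ −48`. -/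
theorem stmt_3 (lam : ℝ) (hlam : 0 < lam) (a : ℕ)
    (ha : a = 12 * ⌈Real.exp (100 * (lam + 1))⌉₊)
    (v : ℕ) (hv : (a : ℝ) / 3 ≤ (v : ℝ)) :
    lam / (lam + 1) * 1 + 1 / (2 * (lam + 1)) * 0 +
      ∑' z : ℕ, (1 / (((z : ℝ) + 1) * ((z : ℝ) + 2))) *
        (1 / (2 * (lam + 1))) * (-(min ((z : ℝ) + 1) (v : ℝ)))
      ≤ -48 := by
  have hl1 : (0:ℝ) < lam + 1 := by linarith
  have hexppos : 0 < Real.exp (100 * (lam + 1)) := Real.exp_pos _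
  set c : ℝ := 1 / (2 * (lam + 1)) with hc
  have hcpos : 0 < c := by positivity
  set g : ℕ → ℝ := fun z => 1 / (((z:ℝ)+1) * ((z:ℝ)+2)) * c * min ((z:ℝ)+1) (v:ℝ) with hg
  -- v is large
  have hE : Real.exp (100*(lam+1)) ≤ (⌈Real.exp (100*(lam+1))⌉₊ : ℝ) := Nat.le_ceil _
  have haR : (a:ℝ) = 12 * (⌈Real.exp (100*(lam+1))⌉₊ : ℝ) := by rw [ha]; push_cast; ring
  have hv4 : 4 * Real.exp (100*(lam+1)) ≤ (v:ℝ) := by nlinarith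
  have hvpos : (0:ℝ) ≤ (v:ℝ) := Nat.cast_nonneg v
  -- nonnegativity of g
  have hgnn : ∀ z : ℕ, 0 ≤ g z := by
    intro z
    have hmin : 0 ≤ min ((z:ℝ)+1) (v:ℝ) := le_min (by positivity) hvpos
    have : (0:ℝ) ≤ 1 / (((z:ℝ)+1) * ((z:ℝ)+2)) * c := by positivity
    exact mul_nonneg this hmin
  -- summability of g
  have hsum : Summable g := by
    have h2 : Summable (fun n : ℕ => (c * v) * (1 / ((n:ℝ)+1) ^ 2)) := by
      have h0 : Summable (fun n : ℕ => 1 / ((n:ℝ)) ^ 2) :=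
        (Real.summable_one_div_nat_pow (p := 2)).2 (by norm_num)
      have := (summable_nat_add_iff (f := fun n : ℕ => 1 / ((n:ℝ)) ^ 2) 1).2 h0
      exact (by simpa [Nat.cast_add] using this : Summable (fun n : ℕ => 1 / ((n:ℝ)+1) ^ 2)).mul_left _
    refine Summable.of_nonneg_of_le hgnn (fun z => ?_) h2
    have h1 : min ((z:ℝ)+1) (v:ℝ) ≤ (v:ℝ) := min_le_right _ _
    have h3 : ((z:ℝ)+1)^2 ≤ ((z:ℝ)+1) * ((z:ℝ)+2) := by nlinarith [(Nat.cast_nonneg z : (0:ℝ) ≤ (z:ℝ))]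
    have h4 : 1 / (((z:ℝ)+1) * ((z:ℝ)+2)) ≤ 1 / ((z:ℝ)+1)^2 :=
      one_div_le_one_div_of_le (by positivity) h3
    have hmin : 0 ≤ min ((z:ℝ)+1) (v:ℝ) := le_min (by positivity) hvpos
    calc g z ≤ 1 / (((z:ℝ)+1) * ((z:ℝ)+2)) * c * (v:ℝ) := by
              exact mul_le_mul_of_nonneg_left h1 (by positivity)
      _ ≤ 1 / ((z:ℝ)+1)^2 * c * (v:ℝ) := by
              exact mul_le_mul_of_nonneg_right (mul_le_mul_of_nonneg_right h4 hcpos.le) hvpos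
      _ = (c * v) * (1 / ((z:ℝ)+1) ^ 2) := by ring
  -- lower bound on partial sum
  have hpartial : c * (Real.log ((v:ℝ)+2) - Real.log 2) ≤ ∑ z ∈ Finset.range v, g z := by
    have hlog : Real.log ((v:ℝ)+2) - Real.log 2 ≤ ∑ z ∈ Finset.range v, 1 / ((z:ℝ)+2) := by
      have htel := Finset.sum_range_sub (fun n : ℕ => Real.log ((n:ℝ)+2)) v
      push_cast at htel
      rw [show ((0:ℝ)+2) = 2 by norm_num] at htel
      rw [← htel]
      apply Finset.sum_le_sum
      intro i _
      have h1 : (0:ℝ) < (i:ℝ)+2 := by positivity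
      have h2 : (0:ℝ) < (i:ℝ)+3 := by positivity
      have hcast : ((i:ℝ)+1+2) = (i:ℝ)+3 := by ring
      rw [hcast]
      have hle := Real.log_le_sub_one_of_pos (show (0:ℝ) < ((i:ℝ)+3)/((i:ℝ)+2) by positivity)
      rw [Real.log_div (by positivity) (by positivity)] at hle
      have heq : ((i:ℝ)+3)/((i:ℝ)+2) - 1 = 1/((i:ℝ)+2) := by field_simp <;> norm_num
      linarith
    have heq : ∑ z ∈ Finset.range v, g z = ∑ z ∈ Finset.range v, c * (1 / ((z:ℝ)+2)) := by
      apply Finset.sum_congr rfl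
      intro z hz
      have hz' : z + 1 ≤ v := Finset.mem_range.mp hz
      have hz'' : (z:ℝ) + 1 ≤ (v:ℝ) := by exact_mod_cast hz'
      rw [hg]
      simp only [min_eq_left hz'']
      field_simp
    rw [heq, ← Finset.mul_sum]
    exact mul_le_mul_of_nonneg_left hlog hcpos.le
  have hT : c * (Real.log ((v:ℝ)+2) - Real.log 2) ≤ ∑' z, g z :=
    le_trans hpartial (Summable.sum_le_tsum _ (fun i _ => hgnn i) hsum)
  -- log bound
  have hlogv : 100 * (lam + 1) ≤ Real.log ((v:ℝ)+2) - Real.log 2 := by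
    rw [← Real.log_div (by positivity) (by norm_num)]
    have h1 : Real.exp (100*(lam+1)) ≤ ((v:ℝ)+2)/2 := by linarith
    calc 100 * (lam+1) = Real.log (Real.exp (100*(lam+1))) := (Real.log_exp _).symm
      _ ≤ Real.log (((v:ℝ)+2)/2) := Real.log_le_log hexppos h1
  -- rewrite tsum
  have htsum : (∑' z : ℕ, (1 / (((z : ℝ) + 1) * ((z : ℝ) + 2))) * c * (-(min ((z : ℝ) + 1) (v : ℝ))))
      = -∑' z, g z := by
    rw [← tsum_neg]
    congr 1
    funext z
    rw [hg]
    ring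
  rw [htsum]
  have h50 : (50:ℝ) ≤ c * (Real.log ((v:ℝ)+2) - Real.log 2) := by
    have : c * (100 * (lam+1)) = 50 := by rw [hc]; field_simp; ring
    nlinarith
  have hfrac : lam / (lam + 1) ≤ 1 := by
    rw [div_le_one hl1]; linarith
  have : (50:ℝ) ≤ ∑' z, g z := le_trans h50 hT
  linarith
end
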